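/- arXiv:1908.04665 — 3 statements merged into one kernel-verified Lean document; each statement's English description precedes it below -/
import Mathlib

section
/- If F is in the Hardy space H^2 of the unit disc and F(α)=0 for some α with |α|<1, then the function H_α(z)=F(z)/(z-α) (with its removable singularity at α filled in) belongs to H^2, and ‖H_α‖_{H^2} ≤ (2/(1-|α|)) ‖F‖_{H^2}. -/
/-!
Comparing Taylor coefficients in `F = (z - α) H` gives `b n = a (n + 1) + α * b (n + 1)`.
Iterating, and using that `α ^ k * b (n + k) → 0` because `H` is holomorphic on the disc,
`|b n| ≤ ∑ⱼ |α| ^ j * |a (n + j + 1)|`. Cauchy–Schwarz with the geometric weights `|α| ^ j`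
and an exchange of summations then give `∑ |b n|² ≤ (1 - |α|)⁻² ∑ |a n|²`.
The estimates are carried out in `ℝ≥0∞`, where rearranging double series needs no
summability hypotheses.
-/

/-- Square of the `H²` norm in terms of Taylor coefficients. -/
noncomputable def h2norm2 (a : ℕ → ℂ) : ℝ := ∑' n, ‖a n‖ ^ 2

/-- `a` is the sequence of Taylor coefficients of `F` on the open unit disc. -/
def IsCoeffs (a : ℕ → ℂ) (F : ℂ → ℂ) : Prop :=
  ∀ z : ℂ, ‖z‖ < 1 → HasSum (fun n => a n * z ^ n) (F z)

open Filter Finset Topology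
open scoped ENNReal

namespace IsCoeffs

variable {a b : ℕ → ℂ} {F H : ℂ → ℂ} {α : ℂ}

theorem hasFPowerSeriesOnBall (ha : IsCoeffs a F) :
    HasFPowerSeriesOnBall F (FormalMultilinearSeries.ofScalars ℂ a) 0 1 where
  r_le := by
    refine ENNReal.le_of_forall_nnreal_lt fun r hr => ?_
    have hr1 : ‖((r : ℝ) : ℂ)‖ < 1 := by simpa using hr
    refine FormalMultilinearSeries.le_radius_of_tendsto _ (l := 0) ?_
    simpa [FormalMultilinearSeries.ofScalars_norm] using
      (ha _ hr1).summable.tendsto_atTop_zero.norm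
  r_pos := one_pos
  hasSum {y} hy := by
    rw [Metric.mem_eball, edist_zero_right, ← ofReal_norm, ENNReal.ofReal_lt_one] at hy
    simpa [FormalMultilinearSeries.ofScalars_apply_eq, mul_comm] using ha y hy

theorem unique {a' : ℕ → ℂ} (ha : IsCoeffs a F) (ha' : IsCoeffs a' F) : a = a' :=
  FormalMultilinearSeries.ofScalars_series_injective ℂ ℂ
    (ha.hasFPowerSeriesOnBall.hasFPowerSeriesAt.eq_formalMultilinearSeries
      ha'.hasFPowerSeriesOnBall.hasFPowerSeriesAt)

theorem tendsto_pow_mul_coeff_add (hb : IsCoeffs b H) (hα : ‖α‖ < 1) (n : ℕ) :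
    Tendsto (fun k => α ^ k * b (n + k)) atTop (𝓝 0) := by
  obtain ⟨r, hαr, hr1⟩ := exists_between hα
  have hr0 : 0 < r := (norm_nonneg α).trans_lt hαr
  have hdecay : Tendsto (fun k => b (k + n) * (r : ℂ) ^ (k + n)) atTop (𝓝 0) :=
    (tendsto_add_atTop_iff_nat n).mpr
      (hb r (by rwa [Complex.norm_real, Real.norm_of_nonneg hr0.le])).summable.tendsto_atTop_zero
  have hratio : ‖α / r‖ < 1 := by
    rwa [norm_div, Complex.norm_real, Real.norm_of_nonneg hr0.le, div_lt_one hr0]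
  convert ((tendsto_pow_atTop_nhds_zero_of_norm_lt_one hratio).mul hdecay).div_const
    ((r : ℂ) ^ n) using 1
  · funext k
    have : (r : ℂ) ≠ 0 := by exact_mod_cast hr0.ne'
    rw [add_comm n k, div_pow, pow_add]
    field_simp
  · simp

theorem coeff_eq_coeff_succ_add_mul (ha : IsCoeffs a F) (hb : IsCoeffs b H)
    (hfac : ∀ z : ℂ, ‖z‖ < 1 → F z = (z - α) * H z) (n : ℕ) :
    b n = a (n + 1) + α * b (n + 1) := by
  let c : ℕ → ℂ := fun m => (match m with | 0 => 0 | k + 1 => b k) - α * b m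
  have hc : IsCoeffs c F := by
    intro z hz
    have hshift :
        HasSum (fun m => (match m with | 0 => 0 | k + 1 => b k) * z ^ m) (z * H z) := by
      rw [← hasSum_nat_add_iff' 1]
      simpa [pow_succ, mul_comm, mul_left_comm] using (hb z hz).mul_left z
    rw [hfac z hz, sub_mul]
    simpa [c, sub_mul, mul_assoc] using hshift.sub ((hb z hz).mul_left α)
  have := congrFun (ha.unique hc) (n + 1)
  simp only [c] at this
  linear_combination -this

end IsCoeffs

theorem eq_sum_range_add_pow_mul_of_eq_add_mul {R : Type*} [CommSemiring R] {a b : ℕ → R} {α : R}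
    (h : ∀ n, b n = a (n + 1) + α * b (n + 1)) (n k : ℕ) :
    b n = ∑ j ∈ range k, α ^ j * a (n + j + 1) + α ^ k * b (n + k) := by
  induction k with
  | zero => simp
  | succ k ih => rw [ih, h (n + k), sum_range_succ, ← add_assoc n k 1]; ring

theorem enorm_le_tsum_pow_mul_of_eq_add_mul {𝕜 : Type*} [NormedField 𝕜] {a b : ℕ → 𝕜} {α : 𝕜}
    (h : ∀ n, b n = a (n + 1) + α * b (n + 1)) (n : ℕ)
    (hlim : Tendsto (fun k => α ^ k * b (n + k)) atTop (𝓝 0)) :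
    ‖b n‖ₑ ≤ ∑' j, ‖α‖ₑ ^ j * ‖a (n + j + 1)‖ₑ := by
  have hk : ∀ k, ‖b n‖ₑ ≤ ∑ j ∈ range k, ‖α‖ₑ ^ j * ‖a (n + j + 1)‖ₑ + ‖α ^ k * b (n + k)‖ₑ := by
    intro k
    rw [eq_sum_range_add_pow_mul_of_eq_add_mul h n k]
    refine (enorm_add_le _ _).trans ?_
    gcongr
    exact (enorm_sum_le _ _).trans_eq (by simp only [enorm_mul, enorm_pow])
  have hsum := (ENNReal.tendsto_nat_tsum fun j => ‖α‖ₑ ^ j * ‖a (n + j + 1)‖ₑ).add hlim.enorm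
  rw [enorm_zero, add_zero] at hsum
  exact ge_of_tendsto' hsum hk

namespace ENNReal

theorem two_mul_mul_le_sq_add_sq (u v : ℝ≥0∞) : 2 * u * v ≤ u ^ 2 + v ^ 2 := by
  rcases eq_or_ne u ⊤ with rfl | hu
  · simp [top_pow]
  rcases eq_or_ne v ⊤ with rfl | hv
  · simp [top_pow]
  lift u to NNReal using hu
  lift v to NNReal using hv
  exact_mod_cast two_mul_le_add_sq u v

theorem tsum_mul_tsum {ι κ : Type*} (f : ι → ℝ≥0∞) (g : κ → ℝ≥0∞) :
    (∑' i, f i) * ∑' j, g j = ∑' i, ∑' j, f i * g j := by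
  rw [← ENNReal.tsum_mul_right]
  exact tsum_congr fun i => ENNReal.tsum_mul_left.symm

theorem sq_tsum_mul_le {ι : Type*} (w u : ι → ℝ≥0∞) :
    (∑' i, w i * u i) ^ 2 ≤ (∑' i, w i) * ∑' i, w i * u i ^ 2 := by
  rw [← ENNReal.mul_le_mul_iff_right two_ne_zero ofNat_ne_top]
  calc 2 * (∑' i, w i * u i) ^ 2 = ∑' i, ∑' j, w i * w j * (2 * u i * u j) := by
        rw [sq, tsum_mul_tsum, ← ENNReal.tsum_mul_left]
        refine tsum_congr fun i => ?_
        rw [← ENNReal.tsum_mul_left]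
        exact tsum_congr fun j => by ring
    _ ≤ ∑' i, ∑' j, (w i * u i ^ 2 * w j + w i * (w j * u j ^ 2)) :=
        ENNReal.tsum_le_tsum fun i => ENNReal.tsum_le_tsum fun j => by
          calc w i * w j * (2 * u i * u j) ≤ w i * w j * (u i ^ 2 + u j ^ 2) := by
                gcongr; exact two_mul_mul_le_sq_add_sq _ _
            _ = _ := by ring
    _ = 2 * ((∑' i, w i) * ∑' i, w i * u i ^ 2) := by
        simp only [ENNReal.tsum_add, ← tsum_mul_tsum]
        ring

theorem tsum_tsum_pow_mul_add_le (t : ℝ≥0∞) (x : ℕ → ℝ≥0∞) :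
    ∑' n, ∑' j, t ^ j * x (n + j) ≤ (1 - t)⁻¹ * ∑' n, x n := by
  rw [ENNReal.tsum_comm, ← ENNReal.tsum_geometric, ← ENNReal.tsum_mul_right]
  refine ENNReal.tsum_le_tsum fun j => ?_
  rw [ENNReal.tsum_mul_left]
  gcongr t ^ j * ?_
  exact ENNReal.tsum_comp_le_tsum_of_injective (add_left_injective j) x

theorem tsum_sq_tsum_pow_mul_add_le (t : ℝ≥0∞) (x : ℕ → ℝ≥0∞) :
    ∑' n, (∑' j, t ^ j * x (n + j)) ^ 2 ≤ (1 - t)⁻¹ ^ 2 * ∑' n, x n ^ 2 :=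
  calc ∑' n, (∑' j, t ^ j * x (n + j)) ^ 2
      ≤ ∑' n, (1 - t)⁻¹ * ∑' j, t ^ j * x (n + j) ^ 2 :=
        ENNReal.tsum_le_tsum fun n => (sq_tsum_mul_le _ _).trans_eq (by rw [ENNReal.tsum_geometric])
    _ ≤ (1 - t)⁻¹ * ((1 - t)⁻¹ * ∑' n, x n ^ 2) := by
        rw [ENNReal.tsum_mul_left]
        gcongr
        exact tsum_tsum_pow_mul_add_le t fun n => x n ^ 2
    _ = (1 - t)⁻¹ ^ 2 * ∑' n, x n ^ 2 := by ring

end ENNReal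

theorem summable_and_h2norm2_le_of_tsum_enorm_sq_le {a b : ℕ → ℂ} {C : ℝ} (hC : 0 ≤ C)
    (ha : Summable fun n => ‖a n‖ ^ 2)
    (h : ∑' n, ‖b n‖ₑ ^ 2 ≤ ENNReal.ofReal C * ∑' n, ‖a n‖ₑ ^ 2) :
    (Summable fun n => ‖b n‖ ^ 2) ∧ h2norm2 b ≤ C * h2norm2 a := by
  have hA : ∑' n, ‖a n‖ₑ ^ 2 = ENNReal.ofReal (h2norm2 a) := by
    rw [h2norm2, ENNReal.ofReal_tsum_of_nonneg (fun n => by positivity) ha]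
    simp [ENNReal.ofReal_pow, ofReal_norm]
  rw [hA, ← ENNReal.ofReal_mul hC] at h
  have htoReal : ∀ n, (‖b n‖ₑ ^ 2).toReal = ‖b n‖ ^ 2 := by simp
  have hfin : ∑' n, ‖b n‖ₑ ^ 2 ≠ ⊤ := (h.trans_lt ENNReal.ofReal_lt_top).ne
  refine ⟨by simpa [htoReal] using ENNReal.summable_toReal hfin, ?_⟩
  calc h2norm2 b = (∑' n, ‖b n‖ₑ ^ 2).toReal := by
        rw [ENNReal.tsum_toReal_eq (fun n => by simp), h2norm2]
        simp only [htoReal]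
    _ ≤ C * h2norm2 a :=
        ENNReal.toReal_le_of_le_ofReal (mul_nonneg hC (tsum_nonneg fun n => by positivity)) h

theorem stmt0_general (F H : ℂ → ℂ) (a b : ℕ → ℂ) (α : ℂ) (hα : ‖α‖ < 1)
    (ha : IsCoeffs a F) (hb : IsCoeffs b H)
    (hF2 : Summable fun n => ‖a n‖ ^ 2)
    (hfac : ∀ z : ℂ, ‖z‖ < 1 → F z = (z - α) * H z) :
    (Summable fun n => ‖b n‖ ^ 2) ∧
      Real.sqrt (h2norm2 b) ≤ 2 / (1 - ‖α‖) * Real.sqrt (h2norm2 a) := by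
  have hpt (n : ℕ) : ‖b n‖ₑ ≤ ∑' j, ‖α‖ₑ ^ j * ‖a (n + j + 1)‖ₑ :=
    enorm_le_tsum_pow_mul_of_eq_add_mul (ha.coeff_eq_coeff_succ_add_mul hb hfac) n
      (hb.tendsto_pow_mul_coeff_add hα n)
  have hpos : 0 < 1 - ‖α‖ := by linarith
  have hconst : (1 - ‖α‖ₑ)⁻¹ ^ 2 = ENNReal.ofReal ((1 - ‖α‖)⁻¹ ^ 2) := by
    rw [← ofReal_norm, ← ENNReal.ofReal_one, ← ENNReal.ofReal_sub _ (norm_nonneg α),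
      ← ENNReal.ofReal_inv_of_pos hpos, ENNReal.ofReal_pow (inv_nonneg.2 hpos.le)]
  have hl2 : ∑' n, ‖b n‖ₑ ^ 2 ≤ ENNReal.ofReal ((1 - ‖α‖)⁻¹ ^ 2) * ∑' n, ‖a n‖ₑ ^ 2 :=
    calc ∑' n, ‖b n‖ₑ ^ 2 ≤ ∑' n, (∑' j, ‖α‖ₑ ^ j * ‖a (n + j + 1)‖ₑ) ^ 2 :=
          ENNReal.tsum_le_tsum fun n => by gcongr; exact hpt n
      _ ≤ (1 - ‖α‖ₑ)⁻¹ ^ 2 * ∑' n, ‖a (n + 1)‖ₑ ^ 2 :=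
          ENNReal.tsum_sq_tsum_pow_mul_add_le _ fun m => ‖a (m + 1)‖ₑ
      _ ≤ _ := by
          rw [hconst]
          gcongr _ * ?_
          exact ENNReal.tsum_comp_le_tsum_of_injective (add_left_injective 1) fun m => ‖a m‖ₑ ^ 2
  obtain ⟨hsum, hle⟩ := summable_and_h2norm2_le_of_tsum_enorm_sq_le (sq_nonneg _) hF2 hl2
  refine ⟨hsum, ?_⟩
  calc Real.sqrt (h2norm2 b) ≤ Real.sqrt ((1 - ‖α‖)⁻¹ ^ 2 * h2norm2 a) := Real.sqrt_le_sqrt hle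
    _ = (1 - ‖α‖)⁻¹ * Real.sqrt (h2norm2 a) := by
        rw [Real.sqrt_mul (by positivity), Real.sqrt_sq (by positivity)]
    _ ≤ 2 / (1 - ‖α‖) * Real.sqrt (h2norm2 a) := by
        gcongr
        rw [inv_eq_one_div]
        gcongr
        norm_num

/-- If `F ∈ H²` vanishes at `α ∈ 𝔻`, then `H(z) = F(z)/(z-α)` (singularity removed)
belongs to `H²` and `‖H‖ ≤ 2/(1-|α|) ‖F‖`. -/
theorem stmt0 (F H : ℂ → ℂ) (a b : ℕ → ℂ) (α : ℂ) (hα : ‖α‖ < 1)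
    (ha : IsCoeffs a F) (hb : IsCoeffs b H)
    (hF2 : Summable fun n => ‖a n‖ ^ 2)
    (hroot : F α = 0)
    (hfac : ∀ z : ℂ, ‖z‖ < 1 → F z = (z - α) * H z) :
    (Summable fun n => ‖b n‖ ^ 2) ∧
      Real.sqrt (h2norm2 b) ≤ 2 / (1 - ‖α‖) * Real.sqrt (h2norm2 a) :=
  stmt0_general F H a b α hα ha hb hF2 hfac
end

section
/- Let (γ_n) be a monotone increasing sequence of nonnegative reals with γ_0=0. Suppose F ∈ X_γ has a root at α ∈ D, so F(z)=(z-α)H_α(z), and define φ_α(F)(z) = (1-ᾱz)H_α(z). Then φ_α(F) ∈ X_γ, H_α ∈ Y_γ, and ‖φ_α(F)‖_{X_γ}^2 = ‖F‖_{X_γ}^2 − (1−|α|^2)‖H_α‖_{Y_γ}^2. -/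
/-!
Summing the pointwise identity
`γₙ₊₁‖dₙ₊₁‖² = γₙ₊₁‖cₙ₊₁‖² + (1 - |α|²) γₙ₊₁ (‖aₙ₊₁‖² - ‖aₙ‖²)` by parts gives
`∑_{n ≤ N} (γₙ‖dₙ‖² + (1 - |α|²)(γₙ₊₁ - γₙ)‖aₙ‖²) = ∑_{n ≤ N} γₙ‖cₙ‖² + (1 - |α|²) γ_{N+1}‖a_N‖²`.
The boundary term tends to zero: `aₘ = cₘ₊₁ + α aₘ₊₁` gives
`‖aₘ‖² - ‖aₘ₊₁‖² ≤ (1 - |α|)⁻¹‖cₘ₊₁‖²`, and telescoping (using `a → 0` and the monotonicity of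
`γ`) bounds `γₙ₊₁‖aₙ‖²` by `(1 - |α|)⁻¹` times the tail `∑_{m > n} γₘ‖cₘ‖²` of the `X_γ` norm
of `F`. As every term on the left is nonnegative, both series on the left converge.
-/

/-- Square of the weighted `X_γ` norm in terms of Taylor coefficients. -/
noncomputable def xnorm2 (γ : ℕ → ℝ) (a : ℕ → ℂ) : ℝ := ∑' n, γ n * ‖a n‖ ^ 2

/-- Square of the weighted `Y_γ` (semi-)norm in terms of Taylor coefficients. -/
noncomputable def ynorm2 (γ : ℕ → ℝ) (a : ℕ → ℂ) : ℝ :=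
  ∑' n, (γ (n + 1) - γ n) * ‖a n‖ ^ 2

open Filter Finset Topology

lemma norm_sub_conj_mul_sq (α x y : ℂ) :
    ‖x - starRingEnd ℂ α * y‖ ^ 2 =
      ‖y - α * x‖ ^ 2 + (1 - ‖α‖ ^ 2) * (‖x‖ ^ 2 - ‖y‖ ^ 2) := by
  simp only [Complex.sq_norm, Complex.normSq_apply, Complex.sub_re, Complex.sub_im,
    Complex.mul_re, Complex.mul_im, Complex.conj_re, Complex.conj_im]
  ring

lemma norm_add_mul_sq_le {α : ℂ} (hα : ‖α‖ < 1) (x y : ℂ) :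
    ‖x + α * y‖ ^ 2 ≤ (1 - ‖α‖)⁻¹ * ‖x‖ ^ 2 + ‖y‖ ^ 2 := by
  have hr : 0 < 1 - ‖α‖ := sub_pos.2 hα
  have htri : ‖x + α * y‖ ≤ ‖x‖ + ‖α‖ * ‖y‖ := (norm_add_le _ _).trans_eq (by rw [norm_mul])
  -- `(1 - r)(p + r q)² + r (p - (1 - r) q)² = p² + r (1 - r) q²` for `p, q, r = ‖x‖, ‖y‖, ‖α‖`
  have hconv : (‖x‖ + ‖α‖ * ‖y‖) ^ 2 ≤ (1 - ‖α‖)⁻¹ * ‖x‖ ^ 2 + ‖y‖ ^ 2 := by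
    rw [inv_mul_eq_div, div_add' _ _ _ hr.ne', le_div_iff₀ hr]
    nlinarith [mul_nonneg (norm_nonneg α) (sq_nonneg (‖x‖ - (1 - ‖α‖) * ‖y‖)),
      mul_nonneg (sq_nonneg (1 - ‖α‖)) (sq_nonneg ‖y‖)]
  exact (pow_le_pow_left₀ (norm_nonneg _) htri 2).trans hconv

section Reflection

variable {γ : ℕ → ℝ} {α : ℂ} {a c d : ℕ → ℂ}

lemma weight_mul_sq_norm_le_tsum (hmono : Monotone γ) (hγ : ∀ n, 0 ≤ γ n) (hα : ‖α‖ < 1)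
    (hc : ∀ n, c (n + 1) = a n - α * a (n + 1))
    (ha : Tendsto (fun n => ‖a n‖ ^ 2) atTop (𝓝 0))
    (hX : Summable fun n => γ n * ‖c n‖ ^ 2) (n : ℕ) :
    γ (n + 1) * ‖a n‖ ^ 2 ≤
      (1 - ‖α‖)⁻¹ * ∑' k, γ (k + (n + 1)) * ‖c (k + (n + 1))‖ ^ 2 := by
  set G := (1 - ‖α‖)⁻¹
  have hG : 0 ≤ G := inv_nonneg.2 (sub_pos.2 hα).le
  have hstep : ∀ m, ‖a m‖ ^ 2 - ‖a (m + 1)‖ ^ 2 ≤ G * ‖c (m + 1)‖ ^ 2 := fun m => by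
    have h := norm_add_mul_sq_le hα (c (m + 1)) (a (m + 1))
    rw [hc m, sub_add_cancel] at h
    rw [hc m]
    linarith
  have htele : ∀ K, γ (n + 1) * (‖a n‖ ^ 2 - ‖a (n + K)‖ ^ 2) ≤
      G * ∑ k ∈ range K, γ (k + (n + 1)) * ‖c (k + (n + 1))‖ ^ 2 := by
    intro K
    induction K with
    | zero => simp
    | succ K ih =>
      have hγK : γ (n + 1) ≤ γ (K + (n + 1)) := hmono (by omega)
      have hstepK := mul_le_mul_of_nonneg_left (hstep (n + K)) (hγ (n + 1))
      rw [show n + K + 1 = K + (n + 1) by omega] at hstepK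
      rw [sum_range_succ, mul_add, show n + (K + 1) = K + (n + 1) by omega]
      nlinarith [mul_le_mul_of_nonneg_right hγK (mul_nonneg hG (sq_nonneg ‖c (K + (n + 1))‖))]
  have htail : Tendsto (fun K => G * (∑' k, γ (k + (n + 1)) * ‖c (k + (n + 1))‖ ^ 2) +
      γ (n + 1) * ‖a (n + K)‖ ^ 2) atTop
      (𝓝 (G * (∑' k, γ (k + (n + 1)) * ‖c (k + (n + 1))‖ ^ 2) + γ (n + 1) * 0)) :=
    tendsto_const_nhds.add (((tendsto_add_atTop_iff_nat n).2 ha).const_mul _ |>.congr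
      fun K => by rw [Nat.add_comm K n])
  rw [mul_zero, add_zero] at htail
  refine ge_of_tendsto' htail fun K => ?_
  have hpartial := mul_le_mul_of_nonneg_left (((summable_nat_add_iff (n + 1)).2 hX).sum_le_tsum
    (range K) fun k _ => mul_nonneg (hγ _) (sq_nonneg _)) hG
  linarith [htele K]

lemma tendsto_weight_mul_sq_norm (hmono : Monotone γ) (hγ : ∀ n, 0 ≤ γ n) (hα : ‖α‖ < 1)
    (hc : ∀ n, c (n + 1) = a n - α * a (n + 1))
    (ha : Tendsto (fun n => ‖a n‖ ^ 2) atTop (𝓝 0))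
    (hX : Summable fun n => γ n * ‖c n‖ ^ 2) :
    Tendsto (fun n => γ (n + 1) * ‖a n‖ ^ 2) atTop (𝓝 0) := by
  have htail := ((tendsto_sum_nat_add fun n => γ n * ‖c n‖ ^ 2).comp
    (tendsto_add_atTop_nat 1)).const_mul (1 - ‖α‖)⁻¹
  rw [mul_zero] at htail
  exact squeeze_zero (fun n => mul_nonneg (hγ _) (sq_nonneg _))
    (weight_mul_sq_norm_le_tsum hmono hγ hα hc ha hX) htail

lemma sum_range_succ_reflect_eq (h0 : γ 0 = 0)
    (hc : ∀ n, c (n + 1) = a n - α * a (n + 1))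
    (hd : ∀ n, d (n + 1) = a (n + 1) - starRingEnd ℂ α * a n) (N : ℕ) :
    ∑ n ∈ range (N + 1), (γ n * ‖d n‖ ^ 2 + (1 - ‖α‖ ^ 2) * ((γ (n + 1) - γ n) * ‖a n‖ ^ 2)) =
      ∑ n ∈ range (N + 1), γ n * ‖c n‖ ^ 2 + (1 - ‖α‖ ^ 2) * (γ (N + 1) * ‖a N‖ ^ 2) := by
  induction N with
  | zero => simp [h0]
  | succ N ih =>
    rw [sum_range_succ, ih, sum_range_succ _ (N + 1), hd, hc, norm_sub_conj_mul_sq]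
    ring

lemma hasSum_reflect_xnorm2 (hmono : Monotone γ) (h0 : γ 0 = 0) (hα : ‖α‖ < 1)
    (hc : ∀ n, c (n + 1) = a n - α * a (n + 1))
    (hd : ∀ n, d (n + 1) = a (n + 1) - starRingEnd ℂ α * a n)
    (ha : Tendsto (fun n => ‖a n‖ ^ 2) atTop (𝓝 0))
    (hX : Summable fun n => γ n * ‖c n‖ ^ 2) :
    HasSum (fun n => γ n * ‖d n‖ ^ 2 + (1 - ‖α‖ ^ 2) * ((γ (n + 1) - γ n) * ‖a n‖ ^ 2))
      (xnorm2 γ c) := by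
  have hγ : ∀ n, 0 ≤ γ n := fun n => h0 ▸ hmono n.zero_le
  have hK : 0 ≤ 1 - ‖α‖ ^ 2 := sub_nonneg.2 (pow_le_one₀ (norm_nonneg α) hα.le)
  rw [hasSum_iff_tendsto_nat_of_nonneg (fun n => add_nonneg (mul_nonneg (hγ n) (sq_nonneg _))
    (mul_nonneg hK (mul_nonneg (sub_nonneg.2 (hmono n.le_succ)) (sq_nonneg _)))),
    ← tendsto_add_atTop_iff_nat 1]
  have hlim := ((tendsto_add_atTop_iff_nat 1).2 hX.hasSum.tendsto_sum_nat).add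
    ((tendsto_weight_mul_sq_norm hmono hγ hα hc ha hX).const_mul (1 - ‖α‖ ^ 2))
  rw [mul_zero, add_zero] at hlim
  exact hlim.congr fun N => (sum_range_succ_reflect_eq h0 hc hd N).symm

end Reflection

lemma HasSum.summable_and_tsum_add_const_mul {ι : Type*} {f g : ι → ℝ} {K s : ℝ} (hK : 0 < K)
    (hf : ∀ i, 0 ≤ f i) (hg : ∀ i, 0 ≤ g i) (h : HasSum (fun i => f i + K * g i) s) :
    Summable f ∧ Summable g ∧ ∑' i, f i + K * ∑' i, g i = s := by
  have hKg : ∀ i, 0 ≤ K * g i := fun i => mul_nonneg hK.le (hg i)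
  have hfs : Summable f := h.summable.of_nonneg_of_le hf fun i => le_add_of_nonneg_right (hKg i)
  have hgs : Summable g := (summable_mul_left_iff hK.ne').1 <|
    h.summable.of_nonneg_of_le hKg fun i => le_add_of_nonneg_left (hf i)
  refine ⟨hfs, hgs, ?_⟩
  rw [← tsum_mul_left, ← hfs.tsum_add (hgs.mul_left K), h.tsum_eq]

theorem stmt1_general (γ : ℕ → ℝ) (hmono : Monotone γ) (h0 : γ 0 = 0)
    (α : ℂ) (hα : ‖α‖ < 1) (a c d : ℕ → ℂ)
    -- `c` are the coefficients of `F(z) = (z-α)H(z)` where `H` has coefficients `a`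
    (hc : ∀ n, c (n + 1) = a n - α * a (n + 1))
    -- `d` are the coefficients of `φ_α(F)(z) = (1-ᾱz)H(z)`
    (hd : ∀ n, d (n + 1) = a (n + 1) - (starRingEnd ℂ) α * a n)
    -- `H ∈ H²` (as follows from `F ∈ H²`)
    (ha2 : Summable fun n => ‖a n‖ ^ 2)
    -- `F ∈ X_γ`
    (hX : Summable fun n => γ n * ‖c n‖ ^ 2) :
    (Summable fun n => γ n * ‖d n‖ ^ 2) ∧
      (Summable fun n => (γ (n + 1) - γ n) * ‖a n‖ ^ 2) ∧
      xnorm2 γ d = xnorm2 γ c - (1 - ‖α‖ ^ 2) * ynorm2 γ a := by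
  have hK : 0 < 1 - ‖α‖ ^ 2 := sub_pos.2 (pow_lt_one₀ (norm_nonneg α) hα two_ne_zero)
  obtain ⟨hdX, haY, hsum⟩ := (hasSum_reflect_xnorm2 hmono h0 hα hc hd ha2.tendsto_atTop_zero hX)
    |>.summable_and_tsum_add_const_mul hK (fun n => mul_nonneg (h0 ▸ hmono n.zero_le) (sq_nonneg _))
      fun n => mul_nonneg (sub_nonneg.2 (hmono n.le_succ)) (sq_nonneg _)
  exact ⟨hdX, haY, eq_sub_of_add_eq hsum⟩

/-- Reflection of a root across the unit circle: if `F(z) = (z-α)H(z)` with Taylor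
coefficients `c` for `F`, `a` for `H`, and `φ_α(F)(z) = (1-ᾱz)H(z)` with coefficients `d`,
and `F ∈ X_γ`, then `φ_α(F) ∈ X_γ`, `H ∈ Y_γ`, and
`‖φ_α(F)‖_{X_γ}² = ‖F‖_{X_γ}² - (1-|α|²)‖H‖_{Y_γ}²`. -/
theorem stmt1 (γ : ℕ → ℝ) (hmono : Monotone γ) (h0 : γ 0 = 0)
    (α : ℂ) (hα : ‖α‖ < 1) (a c d : ℕ → ℂ)
    -- `c` are the coefficients of `F(z) = (z-α)H(z)` where `H` has coefficients `a`
    (hc0 : c 0 = -α * a 0) (hc : ∀ n, c (n + 1) = a n - α * a (n + 1))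
    -- `d` are the coefficients of `φ_α(F)(z) = (1-ᾱz)H(z)`
    (hd0 : d 0 = a 0) (hd : ∀ n, d (n + 1) = a (n + 1) - (starRingEnd ℂ) α * a n)
    -- `H ∈ H²` (as follows from `F ∈ H²`)
    (ha2 : Summable fun n => ‖a n‖ ^ 2)
    -- `F ∈ X_γ`
    (hX : Summable fun n => γ n * ‖c n‖ ^ 2) :
    (Summable fun n => γ n * ‖d n‖ ^ 2) ∧
      (Summable fun n => (γ (n + 1) - γ n) * ‖a n‖ ^ 2) ∧
      xnorm2 γ d = xnorm2 γ c - (1 - ‖α‖ ^ 2) * ynorm2 γ a :=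
  stmt1_general γ hmono h0 α hα a c d hc hd ha2 hX
end

section
/- Let (γ_n) be monotone increasing with γ_0 = 0 and suppose the difference sequence Γ_n = γ_{n+1}−γ_n is monotone increasing (i.e. γ_{n+2}−2γ_{n+1}+γ_n ≥ 0 for all n). If F ∈ X_γ has finitely many zeros α_1,…,α_m in D, with Blaschke decomposition F = B·G, then ‖G‖_{X_γ}^2 ≤ ‖F‖_{X_γ}^2 − Σ_{j=1}^m (1−|α_j|^2)·‖G(e^{i·})/(1−ᾱ_j e^{i·})‖_{Y_γ}^2. -/
open Finset

/-!
One Blaschke factor `b_β z = (z - β) / (1 - conj β z)` at a time. With `H = U / (1 - conj β z)`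
we have `b_β U = (z - β) H` and `U = (1 - conj β z) H`, and coefficientwise
`‖h n - β h (n+1)‖² - ‖h (n+1) - conj β h n‖² = (1 - ‖β‖²) (‖h n‖² - ‖h (n+1)‖²)`.
Summing this against an increasing weight `w` by parts gives
`∑ w ‖b_β U‖² = ∑ w ‖U‖² + (1 - ‖β‖²) ∑ Δw ‖H‖²`; the boundary term `w N ‖h N‖²` vanishes
because `h N = ∑ β ^ j (b_β U)_(N+1+j)` is a geometric average of later coefficients.

Peeling off the factors of `B` one by one, the factor `b_α` contributes
`(1 - ‖α‖²) ∑ Δγ ‖B' G / (1 - conj α z)‖²` for a partial product `B'`. Since `γ` is convex,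
`Δγ` is again an increasing weight, and the same identity (dropping its nonnegative extra
term) shows that removing `B'` can only decrease this, leaving `‖K_α‖²_{Y_γ}`.
-/

open Filter Topology FormalMultilinearSeries ComplexConjugate

namespace IsCoeffs

variable {u v : ℕ → ℂ} {U V : ℂ → ℂ}

lemma congr (hu : IsCoeffs u U) (h : ∀ z : ℂ, ‖z‖ < 1 → U z = V z) : IsCoeffs u V :=
  fun z hz => h z hz ▸ hu z hz

lemma one_le_radius (hu : IsCoeffs u U) : 1 ≤ (ofScalars ℂ u).radius := by
  refine ENNReal.le_of_forall_nnreal_lt fun r hr => ?_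
  have hr1 : ‖(r : ℂ)‖ < 1 := by simpa using hr
  refine (ofScalars ℂ u).le_radius_of_tendsto (l := 0) ?_
  simpa using (hu _ hr1).summable.tendsto_atTop_zero.norm

lemma summable_norm_mul_pow (hu : IsCoeffs u U) {z : ℂ} (hz : ‖z‖ < 1) :
    Summable fun n => ‖u n‖ * ‖z‖ ^ n := by
  have hz' : (‖z‖₊ : ENNReal) < (ofScalars ℂ u).radius :=
    lt_of_lt_of_le (by exact_mod_cast hz) hu.one_le_radius
  simpa using (ofScalars ℂ u).summable_norm_mul_pow hz'

lemma hasFPowerSeriesOnBall_s4 (hu : IsCoeffs u U) :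
    HasFPowerSeriesOnBall U (ofScalars ℂ u) 0 1 where
  r_le := hu.one_le_radius
  r_pos := one_pos
  hasSum {y} hy := by
    simpa [ofScalars_apply_eq, mul_comm] using hu y (by simpa [← ofReal_norm] using hy)

lemma unique_s4 (hu : IsCoeffs u U) (hv : IsCoeffs v U) : u = v := by
  have h := hu.hasFPowerSeriesOnBall_s4.hasFPowerSeriesAt.eq_formalMultilinearSeries
    hv.hasFPowerSeriesOnBall_s4.hasFPowerSeriesAt
  funext n
  simpa [coeff_ofScalars] using congrArg (coeff · n) h

lemma sub (hu : IsCoeffs u U) (hv : IsCoeffs v V) :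
    IsCoeffs (u - v) fun z => U z - V z := fun z hz => by
  simpa [sub_mul] using (hu z hz).sub (hv z hz)

lemma const_mul (hu : IsCoeffs u U) (a : ℂ) :
    IsCoeffs (fun n => a * u n) fun z => a * U z := fun z hz => by
  simpa [mul_assoc] using (hu z hz).mul_left a

lemma summable_pow_mul_add (hu : IsCoeffs u U) {β : ℂ} (hβ : ‖β‖ < 1) (n : ℕ) :
    Summable fun j => ‖β ^ j * u (n + j)‖ := by
  obtain ⟨r, hβr, hr1⟩ := exists_between hβ
  have hr0 : 0 < r := (norm_nonneg β).trans_lt hβr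
  have hs : Summable fun j => (r ^ n)⁻¹ * (‖u (n + j)‖ * r ^ (n + j)) := by
    refine Summable.mul_left _ ?_
    simpa [add_comm n, Complex.norm_real, Real.norm_of_nonneg hr0.le] using
      (summable_nat_add_iff n).2 (hu.summable_norm_mul_pow (z := r) (by simpa [abs_of_pos hr0]))
  refine hs.of_nonneg_of_le (fun _ => norm_nonneg _) fun j => ?_
  have e : (r ^ n)⁻¹ * (‖u (n + j)‖ * r ^ (n + j)) = r ^ j * ‖u (n + j)‖ := by
    rw [pow_add]; field_simp
  rw [e, norm_mul, norm_pow]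
  gcongr

end IsCoeffs

def shiftCoeffs (h : ℕ → ℂ) : ℕ → ℂ
  | 0 => 0
  | n + 1 => h n

noncomputable def geomConv (β : ℂ) (u : ℕ → ℂ) (n : ℕ) : ℂ :=
  ∑ k ∈ range (n + 1), conj β ^ k * u (n - k)

noncomputable def blaschkeFactor (β z : ℂ) : ℂ := (z - β) / (1 - conj β * z)

noncomputable def blaschkeMul (β : ℂ) (u : ℕ → ℂ) : ℕ → ℂ :=
  shiftCoeffs (geomConv β u) - fun n => β * geomConv β u n

@[simp] lemma geomConv_zero (β : ℂ) (u : ℕ → ℂ) : geomConv β u 0 = u 0 := by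
  simp [geomConv]

lemma geomConv_succ (β : ℂ) (u : ℕ → ℂ) (n : ℕ) :
    geomConv β u (n + 1) = u (n + 1) + conj β * geomConv β u n := by
  rw [geomConv, sum_range_succ', geomConv, mul_sum]
  simp only [pow_zero, one_mul, Nat.sub_zero, pow_succ', mul_assoc, Nat.add_sub_add_right,
    add_comm]

@[simp] lemma blaschkeMul_zero (β : ℂ) (u : ℕ → ℂ) : blaschkeMul β u 0 = -(β * u 0) := by
  simp [blaschkeMul, shiftCoeffs]

@[simp] lemma blaschkeMul_succ (β : ℂ) (u : ℕ → ℂ) (n : ℕ) :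
    blaschkeMul β u (n + 1) = geomConv β u n - β * geomConv β u (n + 1) := rfl

lemma norm_lt_one_conj_mul {β z : ℂ} (hβ : ‖β‖ < 1) (hz : ‖z‖ < 1) : ‖conj β * z‖ < 1 := by
  rw [norm_mul, RCLike.norm_conj]
  exact mul_lt_one_of_nonneg_of_lt_one_left (norm_nonneg β) hβ hz.le

namespace IsCoeffs

variable {u : ℕ → ℂ} {U : ℂ → ℂ}

lemma id_mul (hu : IsCoeffs u U) : IsCoeffs (shiftCoeffs u) fun z => z * U z := by
  intro z hz
  refine (hasSum_nat_add_iff' 1).1 ?_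
  have e : ∀ n, z * (u n * z ^ n) = shiftCoeffs u (n + 1) * z ^ (n + 1) := fun n => by
    rw [shiftCoeffs]
    ring
  have h := (hu z hz).mul_left z
  simp only [e] at h
  simpa [shiftCoeffs] using h

lemma div_one_sub_conj_mul (hu : IsCoeffs u U) {β : ℂ} (hβ : ‖β‖ < 1) :
    IsCoeffs (geomConv β u) fun z => U z / (1 - conj β * z) := by
  intro z hz
  have hq := norm_lt_one_conj_mul hβ hz
  have h := hasSum_sum_range_mul_of_summable_norm (f := fun k => (conj β * z) ^ k)
    (g := fun k => u k * z ^ k)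
    (by simpa [norm_pow] using summable_geometric_of_lt_one (norm_nonneg _) hq)
    (by simpa [norm_mul, norm_pow] using hu.summable_norm_mul_pow hz)
  rw [tsum_geometric_of_norm_lt_one hq, (hu z hz).tsum_eq, inv_mul_eq_div] at h
  have e : ∀ n, ∑ k ∈ range (n + 1), (conj β * z) ^ k * (u (n - k) * z ^ (n - k))
      = geomConv β u n * z ^ n := fun n => by
    rw [geomConv, sum_mul]
    refine sum_congr rfl fun k hk => ?_
    rw [← Nat.add_sub_cancel' (Nat.lt_succ_iff.1 (mem_range.1 hk)), Nat.add_sub_cancel_left]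
    ring
  simpa only [e] using h

lemma blaschkeFactor_mul (hu : IsCoeffs u U) {β : ℂ} (hβ : ‖β‖ < 1) :
    IsCoeffs (blaschkeMul β u) fun z => blaschkeFactor β z * U z := by
  have hH := hu.div_one_sub_conj_mul hβ
  refine (hH.id_mul.sub (hH.const_mul β)).congr fun z _ => ?_
  rw [blaschkeFactor]
  ring

end IsCoeffs

lemma norm_sub_mul_sq_sub_norm_sub_conj_mul_sq (β a b : ℂ) :
    ‖a - β * b‖ ^ 2 - ‖b - conj β * a‖ ^ 2 = (1 - ‖β‖ ^ 2) * (‖a‖ ^ 2 - ‖b‖ ^ 2) := by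
  simp only [Complex.sq_norm, Complex.normSq_apply, Complex.sub_re, Complex.sub_im,
    Complex.mul_re, Complex.mul_im, Complex.conj_re, Complex.conj_im]
  ring

lemma sum_range_succ_blaschkeMul (w : ℕ → ℝ) (β : ℂ) (u : ℕ → ℂ) (N : ℕ) :
    ∑ n ∈ range (N + 1), w n * ‖blaschkeMul β u n‖ ^ 2
        + (1 - ‖β‖ ^ 2) * (w N * ‖geomConv β u N‖ ^ 2)
      = ∑ n ∈ range (N + 1), w n * ‖u n‖ ^ 2
        + ∑ n ∈ range N, (1 - ‖β‖ ^ 2) * ((w (n + 1) - w n) * ‖geomConv β u n‖ ^ 2) := by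
  induction N with
  | zero =>
    simp only [zero_add, sum_range_one, blaschkeMul_zero, geomConv_zero, norm_neg, norm_mul,
      range_zero, sum_empty]
    ring
  | succ N ih =>
    have hu : u (N + 1) = geomConv β u (N + 1) - conj β * geomConv β u N := by
      rw [geomConv_succ]; ring
    rw [sum_range_succ (fun n => w n * ‖blaschkeMul β u n‖ ^ 2) (N + 1),
      sum_range_succ (fun n => w n * ‖u n‖ ^ 2) (N + 1),
      sum_range_succ (fun n => (1 - ‖β‖ ^ 2) * ((w (n + 1) - w n) * ‖geomConv β u n‖ ^ 2)) N,
      blaschkeMul_succ, hu]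
    linear_combination ih + w (N + 1) *
      norm_sub_mul_sq_sub_norm_sub_conj_mul_sq β (geomConv β u N) (geomConv β u (N + 1))

lemma summable_and_tsum_add_eq_of_tendsto {a b : ℕ → ℝ} {L : ℝ} (ha : ∀ n, 0 ≤ a n)
    (hb : ∀ n, 0 ≤ b n)
    (h : Tendsto (fun N => ∑ n ∈ range (N + 1), a n + ∑ n ∈ range N, b n) atTop (𝓝 L)) :
    Summable a ∧ Summable b ∧ ∑' n, a n + ∑' n, b n = L := by
  have hmono : Monotone fun N => ∑ n ∈ range (N + 1), a n + ∑ n ∈ range N, b n :=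
    monotone_nat_of_le_succ fun N => by
      simp only [sum_range_succ _ (N + 1), sum_range_succ b N]
      linarith [ha (N + 1), hb N]
  have hle := hmono.ge_of_tendsto h
  have hsa : Summable a := summable_of_sum_range_le ha fun N => by
    linarith [hle N, sum_range_succ a N, ha N, sum_nonneg fun n (_ : n ∈ range N) => hb n]
  have hsb : Summable b := summable_of_sum_range_le hb fun N => by
    linarith [hle N, sum_nonneg fun n (_ : n ∈ range (N + 1)) => ha n]
  refine ⟨hsa, hsb, tendsto_nhds_unique ?_ h⟩
  exact (hsa.hasSum.tendsto_sum_nat.comp (tendsto_add_atTop_nat 1)).add hsb.hasSum.tendsto_sum_nat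

lemma tendsto_tsum_pow_mul_add {r E : ℝ} (hr0 : 0 ≤ r) (hr : r < 1) {e : ℕ → ℝ}
    (he : Tendsto e atTop (𝓝 0)) (hE : ∀ k, ‖e k‖ ≤ E) :
    Tendsto (fun N => ∑' j, r ^ j * e (N + j)) atTop (𝓝 0) := by
  have h := tendsto_tsum_of_dominated_convergence (f := fun N j => r ^ j * e (N + j))
    (g := fun _ => 0) (bound := fun j => r ^ j * E)
    ((summable_geometric_of_lt_one hr0 hr).mul_right E)
    (fun j => by simpa using (he.comp (tendsto_add_atTop_nat j)).const_mul (r ^ j))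
    (Eventually.of_forall fun N j => by
      rw [norm_mul, norm_pow, Real.norm_of_nonneg hr0]; gcongr; exact hE _)
  rwa [tsum_zero] at h

namespace IsCoeffs

variable {u : ℕ → ℂ} {U : ℂ → ℂ} {β : ℂ} {w : ℕ → ℝ}

lemma hasSum_pow_mul_blaschkeMul (hu : IsCoeffs u U) (hβ : ‖β‖ < 1) (n : ℕ) :
    HasSum (fun j => β ^ j * blaschkeMul β u (n + 1 + j)) (geomConv β u n) := by
  have htel : ∀ J, ∑ j ∈ range J, β ^ j * blaschkeMul β u (n + 1 + j)
      = geomConv β u n - β ^ J * geomConv β u (n + J) := by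
    intro J
    induction J with
    | zero => simp
    | succ J ih =>
      rw [sum_range_succ, ih, show n + 1 + J = n + J + 1 by omega, blaschkeMul_succ,
        ← add_assoc]
      ring
  have hdecay : Tendsto (fun J => β ^ J * geomConv β u (n + J)) atTop (𝓝 0) :=
    ((hu.div_one_sub_conj_mul hβ).summable_pow_mul_add hβ n).of_norm.tendsto_atTop_zero
  rw [((hu.blaschkeFactor_mul hβ).summable_pow_mul_add hβ (n + 1)).of_norm.hasSum_iff_tendsto_nat,
    funext htel]
  simpa using tendsto_const_nhds.sub hdecay

lemma tendsto_mul_norm_geomConv_sq (hu : IsCoeffs u U) (hβ : ‖β‖ < 1) (hw : Monotone w)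
    (hw0 : 0 ≤ w 0) (hs : Summable fun n => w n * ‖blaschkeMul β u n‖ ^ 2) :
    Tendsto (fun N => w N * ‖geomConv β u N‖ ^ 2) atTop (𝓝 0) := by
  have hwn : ∀ n, 0 ≤ w n := fun n => hw0.trans (hw n.zero_le)
  set e : ℕ → ℝ := fun k => √(w k) * ‖blaschkeMul β u k‖
  have he : Tendsto e atTop (𝓝 0) := by
    have h := (Real.continuous_sqrt.tendsto 0).comp hs.tendsto_atTop_zero
    rw [Real.sqrt_zero] at h
    refine h.congr fun k => ?_
    simp [e, Real.sqrt_mul (hwn k), Real.sqrt_sq (norm_nonneg _)]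
  obtain ⟨E, hE⟩ := he.norm.bddAbove_range
  have hE' : ∀ k, ‖e k‖ ≤ E := fun k => hE (Set.mem_range_self k)
  set S : ℕ → ℝ := fun N => ∑' j, ‖β‖ ^ j * e (N + 1 + j)
  have hS : Tendsto S atTop (𝓝 0) :=
    (tendsto_tsum_pow_mul_add (norm_nonneg β) hβ he hE').comp (tendsto_add_atTop_nat 1)
  have hle : ∀ N, √(w N) * ‖geomConv β u N‖ ≤ S N := by
    intro N
    have hcn := (hu.blaschkeFactor_mul hβ).summable_pow_mul_add hβ (N + 1)
    have hc : Summable fun j => ‖β‖ ^ j * ‖blaschkeMul β u (N + 1 + j)‖ := by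
      simpa only [norm_mul, norm_pow] using hcn
    have he' : Summable fun j => ‖β‖ ^ j * e (N + 1 + j) :=
      .of_norm_bounded ((summable_geometric_of_lt_one (norm_nonneg β) hβ).mul_right E)
        fun j => by rw [norm_mul, norm_pow, norm_norm]; gcongr; exact hE' _
    calc √(w N) * ‖geomConv β u N‖
        ≤ √(w N) * ∑' j, ‖β‖ ^ j * ‖blaschkeMul β u (N + 1 + j)‖ := by
          rw [← (hu.hasSum_pow_mul_blaschkeMul hβ N).tsum_eq]
          gcongr
          simpa using norm_tsum_le_tsum_norm hcn
      _ ≤ S N := by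
          rw [← tsum_mul_left]
          refine (hc.mul_left _).tsum_le_tsum (fun j => ?_) he'
          rw [mul_left_comm]
          exact mul_le_mul_of_nonneg_left (mul_le_mul_of_nonneg_right
            (Real.sqrt_le_sqrt (hw (by omega))) (norm_nonneg _)) (pow_nonneg (norm_nonneg β) j)
  refine squeeze_zero (fun N => mul_nonneg (hwn N) (sq_nonneg _)) (fun N => ?_)
    (by simpa using hS.pow 2)
  calc w N * ‖geomConv β u N‖ ^ 2 = (√(w N) * ‖geomConv β u N‖) ^ 2 := by
        rw [mul_pow, Real.sq_sqrt (hwn N)]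
    _ ≤ S N ^ 2 := pow_le_pow_left₀ (by positivity) (hle N) 2

lemma tsum_mul_norm_blaschkeMul_sq (hu : IsCoeffs u U) (hβ : ‖β‖ < 1) (hw : Monotone w)
    (hw0 : 0 ≤ w 0) (hs : Summable fun n => w n * ‖blaschkeMul β u n‖ ^ 2) :
    (Summable fun n => w n * ‖u n‖ ^ 2) ∧
      (Summable fun n => (w (n + 1) - w n) * ‖geomConv β u n‖ ^ 2) ∧
      ∑' n, w n * ‖blaschkeMul β u n‖ ^ 2
        = ∑' n, w n * ‖u n‖ ^ 2
          + (1 - ‖β‖ ^ 2) * ∑' n, (w (n + 1) - w n) * ‖geomConv β u n‖ ^ 2 := by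
  have hβ2 : 0 < 1 - ‖β‖ ^ 2 := sub_pos.2 (pow_lt_one₀ (norm_nonneg β) hβ two_ne_zero)
  have key : Tendsto (fun N => ∑ n ∈ range (N + 1), w n * ‖u n‖ ^ 2
      + ∑ n ∈ range N, (1 - ‖β‖ ^ 2) * ((w (n + 1) - w n) * ‖geomConv β u n‖ ^ 2))
      atTop (𝓝 (∑' n, w n * ‖blaschkeMul β u n‖ ^ 2)) := by
    have h := (hs.hasSum.tendsto_sum_nat.comp (tendsto_add_atTop_nat 1)).add
      ((hu.tendsto_mul_norm_geomConv_sq hβ hw hw0 hs).const_mul (1 - ‖β‖ ^ 2))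
    rw [mul_zero, add_zero] at h
    exact h.congr fun N => sum_range_succ_blaschkeMul w β u N
  obtain ⟨hsu, hsh, heq⟩ := summable_and_tsum_add_eq_of_tendsto
    (fun n => mul_nonneg (hw0.trans (hw n.zero_le)) (sq_nonneg _))
    (fun n => mul_nonneg hβ2.le (mul_nonneg (sub_nonneg.2 (hw n.le_succ)) (sq_nonneg _))) key
  refine ⟨hsu, (summable_mul_left_iff hβ2.ne').1 hsh, ?_⟩
  rw [← heq, tsum_mul_left]

variable {ι : Type*} {s : Finset ι} {α : ι → ℂ} {g f : ℕ → ℂ} {G : ℂ → ℂ}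

lemma exists_prod_blaschkeFactor_mul (hg : IsCoeffs g G) (hα : ∀ j ∈ s, ‖α j‖ < 1) :
    ∃ f, IsCoeffs f fun z => (∏ j ∈ s, blaschkeFactor (α j) z) * G z := by
  classical
  induction s using Finset.induction_on with
  | empty => exact ⟨g, hg.congr fun z _ => by simp⟩
  | insert a s ha ih =>
    obtain ⟨f, hf⟩ := ih fun j hj => hα j (mem_insert_of_mem hj)
    exact ⟨_, (hf.blaschkeFactor_mul (hα a (mem_insert_self a s))).congr fun z _ => by
      rw [prod_insert ha, mul_assoc]⟩

lemma exists_eq_blaschkeMul [DecidableEq ι] {a : ι} (ha : a ∉ s) (hg : IsCoeffs g G)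
    (hα : ∀ j ∈ insert a s, ‖α j‖ < 1)
    (hf : IsCoeffs f fun z => (∏ j ∈ insert a s, blaschkeFactor (α j) z) * G z) :
    ∃ f', IsCoeffs f' (fun z => (∏ j ∈ s, blaschkeFactor (α j) z) * G z) ∧
      f = blaschkeMul (α a) f' := by
  obtain ⟨f', hf'⟩ := hg.exists_prod_blaschkeFactor_mul fun j hj => hα j (mem_insert_of_mem hj)
  refine ⟨f', hf', hf.unique_s4 ((hf'.blaschkeFactor_mul (hα a (mem_insert_self a s))).congr
    fun z _ => ?_)⟩
  rw [prod_insert ha, mul_assoc]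

lemma tsum_mul_norm_sq_le_of_prod_blaschkeFactor_mul {w : ℕ → ℝ} (hw : Monotone w)
    (hw0 : 0 ≤ w 0) (hg : IsCoeffs g G) (hα : ∀ j ∈ s, ‖α j‖ < 1)
    (hf : IsCoeffs f fun z => (∏ j ∈ s, blaschkeFactor (α j) z) * G z)
    (hs : Summable fun n => w n * ‖f n‖ ^ 2) :
    (Summable fun n => w n * ‖g n‖ ^ 2) ∧ ∑' n, w n * ‖g n‖ ^ 2 ≤ ∑' n, w n * ‖f n‖ ^ 2 := by
  classical
  induction s using Finset.induction_on generalizing f with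
  | empty =>
    obtain rfl := hf.unique_s4 (hg.congr fun z _ => by simp)
    exact ⟨hs, le_rfl⟩
  | insert a s ha ih =>
    have hαa := hα a (mem_insert_self a s)
    obtain ⟨f', hf', rfl⟩ := hg.exists_eq_blaschkeMul ha hα hf
    obtain ⟨hs', -, heq⟩ := hf'.tsum_mul_norm_blaschkeMul_sq hαa hw hw0 hs
    obtain ⟨hsg, hle⟩ := ih (fun j hj => hα j (mem_insert_of_mem hj)) hf' hs'
    have hY : 0 ≤ (1 - ‖α a‖ ^ 2) * ∑' n, (w (n + 1) - w n) * ‖geomConv (α a) f' n‖ ^ 2 :=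
      mul_nonneg (sub_nonneg.2 (pow_le_one₀ (norm_nonneg _) hαa.le))
        (tsum_nonneg fun n => mul_nonneg (sub_nonneg.2 (hw n.le_succ)) (sq_nonneg _))
    exact ⟨hsg, by linarith⟩

lemma tsum_mul_norm_sq_add_sum_le {γ : ℕ → ℝ} (hγ : Monotone γ) (hγ0 : 0 ≤ γ 0)
    (hΔ : Monotone fun n => γ (n + 1) - γ n) (hg : IsCoeffs g G) (hα : ∀ j ∈ s, ‖α j‖ < 1)
    (hf : IsCoeffs f fun z => (∏ j ∈ s, blaschkeFactor (α j) z) * G z)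
    (hs : Summable fun n => γ n * ‖f n‖ ^ 2) :
    (∀ j ∈ s, Summable fun n => (γ (n + 1) - γ n) * ‖geomConv (α j) g n‖ ^ 2) ∧
      ∑' n, γ n * ‖g n‖ ^ 2
          + ∑ j ∈ s, (1 - ‖α j‖ ^ 2) * ∑' n, (γ (n + 1) - γ n) * ‖geomConv (α j) g n‖ ^ 2
        ≤ ∑' n, γ n * ‖f n‖ ^ 2 := by
  classical
  induction s using Finset.induction_on generalizing f with
  | empty =>
    obtain rfl := hf.unique_s4 (hg.congr fun z _ => by simp)
    simp
  | insert a s ha ih =>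
    have hαa := hα a (mem_insert_self a s)
    have hαs : ∀ j ∈ s, ‖α j‖ < 1 := fun j hj => hα j (mem_insert_of_mem hj)
    obtain ⟨f', hf', rfl⟩ := hg.exists_eq_blaschkeMul ha hα hf
    obtain ⟨hs', hsY, heq⟩ := hf'.tsum_mul_norm_blaschkeMul_sq hαa hγ hγ0 hs
    obtain ⟨hYs, hle⟩ := ih hαs hf' hs'
    obtain ⟨hYa, hYle⟩ :=
      (hg.div_one_sub_conj_mul hαa).tsum_mul_norm_sq_le_of_prod_blaschkeFactor_mul hΔ
        (sub_nonneg.2 (hγ (Nat.zero_le 1))) hαs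
        ((hf'.div_one_sub_conj_mul hαa).congr fun z _ => mul_div_assoc _ _ _) hsY
    refine ⟨fun j hj => ?_, ?_⟩
    · rcases mem_insert.1 hj with rfl | hj
      · exact hYa
      · exact hYs j hj
    · rw [sum_insert ha, heq]
      have := mul_le_mul_of_nonneg_left hYle
        (sub_nonneg.2 (pow_le_one₀ (norm_nonneg _) hαa.le) : 0 ≤ 1 - ‖α a‖ ^ 2)
      linarith

end IsCoeffs

theorem stmt4_general (γ : ℕ → ℝ) (hmono : Monotone γ) (h0 : γ 0 = 0)
    (hconv : ∀ n, γ (n + 1) - γ n ≤ γ (n + 2) - γ (n + 1))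
    (m : ℕ) (α : ℕ → ℂ) (hα : ∀ j ∈ Icc 1 m, ‖α j‖ < 1)
    (F G : ℂ → ℂ) (f g : ℕ → ℂ) (K : ℕ → ℕ → ℂ)
    (hf : IsCoeffs f F) (hg : IsCoeffs g G)
    (hfac : ∀ z : ℂ, ‖z‖ < 1 →
      F z = (∏ j ∈ Icc 1 m, (z - α j) / (1 - (starRingEnd ℂ) (α j) * z)) * G z)
    -- `K j` are the Taylor coefficients of `G(z)/(1-ᾱ_j z)`
    (hK : ∀ j ∈ Icc 1 m, ∀ z : ℂ, ‖z‖ < 1 →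
      HasSum (fun n => K j n * z ^ n) (G z / (1 - (starRingEnd ℂ) (α j) * z)))
    (hX : Summable fun n => γ n * ‖f n‖ ^ 2) :
    (∀ j ∈ Icc 1 m, Summable fun n => (γ (n + 1) - γ n) * ‖K j n‖ ^ 2) ∧
      xnorm2 γ g ≤
        xnorm2 γ f - ∑ j ∈ Icc 1 m, (1 - ‖α j‖ ^ 2) * ynorm2 γ (K j) := by
  have hF : IsCoeffs f fun z => (∏ j ∈ Icc 1 m, blaschkeFactor (α j) z) * G z :=
    hf.congr hfac
  have hKg : ∀ j ∈ Icc 1 m, K j = geomConv (α j) g := fun j hj =>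
    IsCoeffs.unique_s4 (hK j hj) (hg.div_one_sub_conj_mul (hα j hj))
  obtain ⟨hY, hle⟩ :=
    hg.tsum_mul_norm_sq_add_sum_le hmono h0.ge (monotone_nat_of_le_succ hconv) hα hF hX
  refine ⟨fun j hj => hKg j hj ▸ hY j hj, ?_⟩
  have hYK : ∑ j ∈ Icc 1 m, (1 - ‖α j‖ ^ 2) * ynorm2 γ (K j)
      = ∑ j ∈ Icc 1 m, (1 - ‖α j‖ ^ 2) * ∑' n, (γ (n + 1) - γ n) * ‖geomConv (α j) g n‖ ^ 2 :=
    sum_congr rfl fun j hj => by rw [ynorm2, hKg j hj]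
  rw [xnorm2, xnorm2, hYK]
  linarith

/-- Theorem 1: if the differences `γ_{n+1}-γ_n` are monotone increasing and `F ∈ X_γ`
has finitely many zeros `α_1,…,α_m` in `𝔻` with Blaschke decomposition `F = B·G`, then
`‖G‖_{X_γ}² ≤ ‖F‖_{X_γ}² − Σ_j (1-|α_j|²)‖G/(1-ᾱ_j·)‖_{Y_γ}²`. -/
theorem stmt4 (γ : ℕ → ℝ) (hmono : Monotone γ) (h0 : γ 0 = 0)
    (hconv : ∀ n, γ (n + 1) - γ n ≤ γ (n + 2) - γ (n + 1))
    (m : ℕ) (α : ℕ → ℂ) (hα : ∀ j ∈ Icc 1 m, ‖α j‖ < 1)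
    (F G : ℂ → ℂ) (f g : ℕ → ℂ) (K : ℕ → ℕ → ℂ)
    (hf : IsCoeffs f F) (hg : IsCoeffs g G)
    (hG0 : ∀ z : ℂ, ‖z‖ < 1 → G z ≠ 0)
    (hfac : ∀ z : ℂ, ‖z‖ < 1 →
      F z = (∏ j ∈ Icc 1 m, (z - α j) / (1 - (starRingEnd ℂ) (α j) * z)) * G z)
    -- `K j` are the Taylor coefficients of `G(z)/(1-ᾱ_j z)`
    (hK : ∀ j ∈ Icc 1 m, ∀ z : ℂ, ‖z‖ < 1 →
      HasSum (fun n => K j n * z ^ n) (G z / (1 - (starRingEnd ℂ) (α j) * z)))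
    (hH2 : Summable fun n => ‖f n‖ ^ 2)
    (hX : Summable fun n => γ n * ‖f n‖ ^ 2) :
    (∀ j ∈ Icc 1 m, Summable fun n => (γ (n + 1) - γ n) * ‖K j n‖ ^ 2) ∧
      xnorm2 γ g ≤
        xnorm2 γ f - ∑ j ∈ Icc 1 m, (1 - ‖α j‖ ^ 2) * ynorm2 γ (K j) :=
  stmt4_general γ hmono h0 hconv m α hα F G f g K hf hg hfac hK hX
end
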